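/- arXiv:1307.5473 — 3 statements merged into one kernel-verified Lean document; each statement's English description precedes it below -/
import Mathlib

section
/- Suppose a, b satisfy the system (Δ + ñ² − λ²)a = μ·b-type coupled equations reduced on a μ-eigenspace of Δ restricted to k-forms: if ((Δ + (ñ−1)² − λ²)(Δ + ñ² − λ²) − Δ)a = 0 with Δa = μ a and a ≠ 0, then λ ∈ { ±1/2 ± √((k − f/2 − 1/2)² + μ) }, where ñ = k − f/2. -/
/-!
The quartic factors as `((λ - 1/2)² - R) ((λ + 1/2)² - R)` with `R = (ñ - 1/2)² + μ`, so
`λ ∓ 1/2 = ±√R`. A vanishing factor is a square equal to `R`, which forces `R ≥ 0`.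
-/

lemma indicial_quartic_factor (n μ lam : ℝ) :
    (μ + (n - 1) ^ 2 - lam ^ 2) * (μ + n ^ 2 - lam ^ 2) - μ =
      ((lam - 1 / 2) ^ 2 - ((n - 1 / 2) ^ 2 + μ)) *
        ((lam + 1 / 2) ^ 2 - ((n - 1 / 2) ^ 2 + μ)) := by
  ring

lemma Real.eq_add_sqrt_or_eq_sub_sqrt_of_sq_sub_eq {x c R : ℝ} (h : (x - c) ^ 2 = R) :
    x = c + √R ∨ x = c - √R := by
  have hsq : (x - c) ^ 2 = √R ^ 2 := by
    rw [Real.sq_sqrt (h ▸ sq_nonneg _), h]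
  rcases sq_eq_sq_iff_eq_or_eq_neg.mp hsq with hx | hx
  · exact Or.inl (by linarith)
  · exact Or.inr (by linarith)

theorem stmt3_general {V : Type*} [AddCommGroup V] [Module ℝ V]
    (k f μ lam : ℝ) (a : V) (ha : a ≠ 0)
    (h : ((μ + (k - f / 2 - 1) ^ 2 - lam ^ 2) * (μ + (k - f / 2) ^ 2 - lam ^ 2) - μ) • a = 0) :
    lam = 1 / 2 + Real.sqrt ((k - f / 2 - 1 / 2) ^ 2 + μ) ∨
    lam = 1 / 2 - Real.sqrt ((k - f / 2 - 1 / 2) ^ 2 + μ) ∨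
    lam = -(1 / 2) + Real.sqrt ((k - f / 2 - 1 / 2) ^ 2 + μ) ∨
    lam = -(1 / 2) - Real.sqrt ((k - f / 2 - 1 / 2) ^ 2 + μ) := by
  have hquartic := (smul_eq_zero.mp h).resolve_right ha
  rw [indicial_quartic_factor] at hquartic
  rcases mul_eq_zero.mp hquartic with hminus | hplus
  · exact (Real.eq_add_sqrt_or_eq_sub_sqrt_of_sq_sub_eq (sub_eq_zero.mp hminus)).elim
      Or.inl (Or.inr ∘ Or.inl)
  · have hplus' : (lam - -(1 / 2)) ^ 2 = (k - f / 2 - 1 / 2) ^ 2 + μ := by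
      rw [sub_neg_eq_add]; exact sub_eq_zero.mp hplus
    exact Or.inr (Or.inr (Real.eq_add_sqrt_or_eq_sub_sqrt_of_sq_sub_eq hplus'))

/-- Indicial root computation: if `((Δ + (ñ−1)² − λ²)(Δ + ñ² − λ²) − Δ) a = 0` on a
`μ`-eigenspace of `Δ` restricted to `k`-forms (with `ñ = k − f/2`) and `a ≠ 0`, then
`λ ∈ { ±1/2 ± √((k − f/2 − 1/2)² + μ) }`. -/
theorem stmt3 {V : Type*} [AddCommGroup V] [Module ℝ V]
    (k f μ lam : ℝ) (hμ : 0 ≤ μ) (a : V) (ha : a ≠ 0)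
    (h : ((μ + (k - f / 2 - 1) ^ 2 - lam ^ 2) * (μ + (k - f / 2) ^ 2 - lam ^ 2) - μ) • a = 0) :
    lam = 1 / 2 + Real.sqrt ((k - f / 2 - 1 / 2) ^ 2 + μ) ∨
    lam = 1 / 2 - Real.sqrt ((k - f / 2 - 1 / 2) ^ 2 + μ) ∨
    lam = -(1 / 2) + Real.sqrt ((k - f / 2 - 1 / 2) ^ 2 + μ) ∨
    lam = -(1 / 2) - Real.sqrt ((k - f / 2 - 1 / 2) ^ 2 + μ) :=
  stmt3_general k f μ lam a ha h
end

section
/- Let f be odd and suppose every eigenvalue μ of the Laplacian on j-forms of the link with |j − f/2| = 1/2 satisfies μ ∉ (0, 1). Then every number of the form −f/2 ± 1/2 ± √((k − f/2 ± 1/2)² + μ) with μ > 0, and every number −k or k − f with k an integer, lying in [−f/2 − 1/2, −f/2 + 1/2], must equal −f/2 + 1/2 or −f/2 − 1/2. -/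
/-!
Both families are `-f/2 + x` with `x` either `±1/2 ± √(n² + μ)` for an integer `n` (because `f` is
odd, `k - f/2 ± 1/2` is an integer) or a half-odd integer. In the first case `n² + μ ≥ 1`: for
`n ≠ 0` this is clear, and `n = 0` means `|k - f/2| = 1/2`, where the spectral gap gives `μ ≥ 1`.
So `|x| ≥ √(n² + μ) - 1/2 ≥ 1/2`, and a half-odd integer has `|x| ≥ 1/2` as well: a point of the
window `|x| ≤ 1/2` must be one of its endpoints.
-/

open Set

lemma eq_add_or_eq_sub_of_mem_Icc {c r ζ : ℝ} (hr : 0 ≤ r)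
    (hbdry : |ζ - c| ≤ r → |ζ - c| = r) (hζ : ζ ∈ Icc (c - r) (c + r)) :
    ζ = c + r ∨ ζ = c - r := by
  rw [← mem_Icc_iff_abs_le, abs_sub_comm] at hζ
  rcases (abs_eq hr).1 (hbdry hζ) with h | h
  · left; linarith
  · right; linarith

lemma sub_half_le_abs_half_add_mul {ε₁ ε₂ s : ℝ} (h₁ : |ε₁| = 1) (h₂ : |ε₂| = 1) (hs : 0 ≤ s) :
    s - 1 / 2 ≤ |ε₁ / 2 + ε₂ * s| := by
  have hs' : |ε₂ * s| = s := by rw [abs_mul, h₂, one_mul, abs_of_nonneg hs]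
  have hε₁ : |ε₁ / 2| = 1 / 2 := by rw [abs_div, h₁, abs_two]
  have := abs_sub_abs_le_abs_add (ε₂ * s) (ε₁ / 2)
  rw [hs', hε₁, add_comm] at this
  exact this

lemma abs_half_add_mul_eq_half {ε₁ ε₂ s : ℝ} (h₁ : |ε₁| = 1) (h₂ : |ε₂| = 1) (hs : 1 ≤ s)
    (hle : |ε₁ / 2 + ε₂ * s| ≤ 1 / 2) : |ε₁ / 2 + ε₂ * s| = 1 / 2 := by
  have := sub_half_le_abs_half_add_mul h₁ h₂ (zero_le_one.trans hs)
  linarith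

lemma abs_int_add_half_eq_half {j : ℤ} (hle : |(j : ℝ) + 1 / 2| ≤ 1 / 2) :
    |(j : ℝ) + 1 / 2| = 1 / 2 := by
  obtain ⟨hlo, hhi⟩ := abs_le.1 hle
  have hj₁ : -1 ≤ j := by exact_mod_cast (show (-1 : ℝ) ≤ j by linarith)
  have hj₂ : j ≤ 0 := by exact_mod_cast (show (j : ℝ) ≤ 0 by linarith)
  obtain rfl | rfl : j = -1 ∨ j = 0 := by omega
  all_goals norm_num

lemma one_le_intCast_sq_add {n : ℤ} {μ : ℝ} (hμ : 0 < μ) (hgap : n = 0 → 1 ≤ μ) :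
    1 ≤ (n : ℝ) ^ 2 + μ := by
  rcases eq_or_ne n 0 with rfl | hn
  · simpa using hgap rfl
  · have : (1 : ℝ) ≤ (n : ℝ) ^ 2 := by
      rw [← sq_abs]
      exact one_le_pow₀ (by exact_mod_cast Int.one_le_abs hn)
    linarith

lemma abs_eq_one_of_eq_one_or_eq_neg_one {ε : ℝ} (hε : ε = 1 ∨ ε = -1) : |ε| = 1 := by
  rcases hε with rfl | rfl <;> norm_num

lemma Odd.exists_intCast_eq_sub_half_add {f : ℕ} (hf : Odd f) (k : ℤ) {ε : ℝ}
    (hε : ε = 1 ∨ ε = -1) : ∃ n : ℤ, (k : ℝ) - f / 2 + ε / 2 = n := by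
  obtain ⟨m, rfl⟩ := hf
  rcases hε with rfl | rfl
  · exact ⟨k - m, by push_cast; ring⟩
  · exact ⟨k - m - 1, by push_cast; ring⟩

lemma Odd.exists_intCast_add_half_eq_intCast_add_half {f : ℕ} (hf : Odd f) (k : ℤ) :
    ∃ j : ℤ, (k : ℝ) + f / 2 = j + 1 / 2 := by
  obtain ⟨m, rfl⟩ := hf
  exact ⟨k + m, by push_cast; ring⟩

/-- Suitable scaling, odd-dimensional link: if every Laplace eigenvalue `μ` on `j`-forms
with `|j − f/2| = 1/2` avoids `(0, 1)`, then every number of the form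
`−f/2 ± 1/2 ± √((k − f/2 ± 1/2)² + μ)` with `μ > 0`, and every number `−k` or `k − f`
with `k` an integer, lying in `[−f/2 − 1/2, −f/2 + 1/2]` must equal `−f/2 ± 1/2`. -/
theorem stmt5 (f : ℕ) (hf : Odd f) (Spec : ℤ → Set ℝ)
    (hgap : ∀ j : ℤ, |(j : ℝ) - f / 2| = 1 / 2 → ∀ μ ∈ Spec j, ¬(0 < μ ∧ μ < 1)) :
    (∀ k : ℤ, ∀ μ ∈ Spec k, 0 < μ →
      ∀ ε₁ ε₂ ε₃ : ℝ, (ε₁ = 1 ∨ ε₁ = -1) → (ε₂ = 1 ∨ ε₂ = -1) → (ε₃ = 1 ∨ ε₃ = -1) →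
        ∀ ζ : ℝ,
          ζ = -(f : ℝ) / 2 + ε₁ / 2 + ε₂ * Real.sqrt (((k : ℝ) - f / 2 + ε₃ / 2) ^ 2 + μ) →
          ζ ∈ Set.Icc (-(f : ℝ) / 2 - 1 / 2) (-(f : ℝ) / 2 + 1 / 2) →
          (ζ = -(f : ℝ) / 2 + 1 / 2 ∨ ζ = -(f : ℝ) / 2 - 1 / 2)) ∧
    (∀ k : ℤ, ∀ ζ : ℝ, (ζ = -(k : ℝ) ∨ ζ = (k : ℝ) - f) →
      ζ ∈ Set.Icc (-(f : ℝ) / 2 - 1 / 2) (-(f : ℝ) / 2 + 1 / 2) →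
      (ζ = -(f : ℝ) / 2 + 1 / 2 ∨ ζ = -(f : ℝ) / 2 - 1 / 2)) := by
  refine ⟨?_, ?_⟩
  · rintro k μ hμ hμpos ε₁ ε₂ ε₃ h₁ h₂ h₃ ζ rfl
    refine eq_add_or_eq_sub_of_mem_Icc (by norm_num) ?_
    obtain ⟨n, hn⟩ := hf.exists_intCast_eq_sub_half_add k h₃
    have hμgap : n = 0 → 1 ≤ μ := fun hn0 ↦ by
      have hk : (k : ℝ) - f / 2 = -(ε₃ / 2) := by
        rw [hn0, Int.cast_zero] at hn
        linarith
      have hk' : |(k : ℝ) - f / 2| = 1 / 2 := by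
        rw [hk, abs_neg, abs_div, abs_eq_one_of_eq_one_or_eq_neg_one h₃, abs_two]
      exact not_lt.1 fun hμ1 ↦ hgap k hk' μ hμ ⟨hμpos, hμ1⟩
    have hs : 1 ≤ Real.sqrt (((k : ℝ) - f / 2 + ε₃ / 2) ^ 2 + μ) :=
      Real.one_le_sqrt.2 (hn ▸ one_le_intCast_sq_add hμpos hμgap)
    rw [show ∀ x : ℝ, -(f : ℝ) / 2 + ε₁ / 2 + x - -(f : ℝ) / 2 = ε₁ / 2 + x from
      fun x ↦ by ring]
    exact abs_half_add_mul_eq_half (abs_eq_one_of_eq_one_or_eq_neg_one h₁)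
      (abs_eq_one_of_eq_one_or_eq_neg_one h₂) hs
  · rintro k ζ hζ
    refine eq_add_or_eq_sub_of_mem_Icc (by norm_num) ?_
    obtain ⟨l, hl⟩ : ∃ l : ℤ, ζ = l := by
      rcases hζ with rfl | rfl
      · exact ⟨-k, by push_cast; ring⟩
      · exact ⟨k - f, by push_cast; ring⟩
    obtain ⟨j, hj⟩ := hf.exists_intCast_add_half_eq_intCast_add_half l
    rw [hl, show (l : ℝ) - -(f : ℝ) / 2 = l + f / 2 by ring, hj]
    exact abs_int_add_half_eq_half
end

section
/- Let (D, d) be a Hilbert complex: d a closed densely defined operator on a Hilbert space H with d(D(d) ) ⊆ D(d) and d² = 0 on D(d). Let δ = d* be its adjoint. If the associated operator d + δ with domain D(d) ∩ D(δ) is Fredholm, then H decomposes orthogonally as H = 𝓗 ⊕ closure(ran d) ⊕ closure(ran δ) with 𝓗 = ker d ∩ ker δ finite-dimensional, the ranges of d and δ are closed, and the cohomology ker d / ran d is isomorphic to 𝓗. -/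
/-!
Since `d² = 0`, `ran d ⊥ ran δ`, so `L u = 0` iff `d u = 0` and `δ u = 0`. For closed densely
defined `d` one has `ker δ = (ran d)ᗮ` and `ker d = (ran δ)ᗮ`, so the harmonic space is
`(ran d)ᗮ ⊓ (ran δ)ᗮ`. The closed subspace `ran L` has finite codimension and lies in the orthogonal
sum `ran d ⊕ ran δ`, which forces both summands to be closed. Orthogonal projection then gives
`H = 𝓗 ⊕ ran d ⊕ ran δ`, and `ker d = (ran δ)ᗮ = 𝓗 ⊕ ran d` gives `ker d / ran d ≅ 𝓗`.
-/

open Submodule LinearMap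
open scoped InnerProductSpace

section FiniteCodimension

variable {𝕜 E : Type*} [NontriviallyNormedField 𝕜] [CompleteSpace 𝕜] [AddCommGroup E]
  [TopologicalSpace E] [IsTopologicalAddGroup E] [Module 𝕜 E] [ContinuousSMul 𝕜 E]

/-- `R = (R ⊔ S) ⊓ closure R`, and `R ⊔ S` is closed since it contains `S`. -/
theorem Submodule.isClosed_of_topologicalClosure_inf_le {R S : Submodule 𝕜 E}
    [FiniteDimensional 𝕜 (E ⧸ S)] (hS : IsClosed (S : Set E))
    (h : R.topologicalClosure ⊓ S ≤ R) : IsClosed (R : Set E) := by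
  have hR : ((R ⊔ S) ⊓ R.topologicalClosure : Submodule 𝕜 E) = R := by
    refine le_antisymm (fun x ⟨hxRS, hxR⟩ => ?_) (le_inf le_sup_left R.le_topologicalClosure)
    obtain ⟨r, hr, s, hs, rfl⟩ := mem_sup.1 hxRS
    have hsR : s ∈ R.topologicalClosure := by
      simpa using sub_mem hxR (R.le_topologicalClosure hr)
    exact add_mem hr (h ⟨hsR, hs⟩)
  rw [← hR]
  exact (isClosed_mono_of_finiteDimensional_quotient hS le_sup_right).inter
    R.isClosed_topologicalClosure

end FiniteCodimension

theorem Submodule.nonempty_quotient_equiv_of_sup_eq {R M : Type*} [Ring R] [AddCommGroup M]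
    [Module R M] {K A C : Submodule R M} (hK : C ⊔ A = K) (hCA : Disjoint C A) :
    Nonempty ((K ⧸ comap K.subtype A) ≃ₗ[R] C) := by
  subst hK
  have hbot : comap C.subtype (C ⊓ A) = ⊥ := by
    rw [hCA.eq_bot, comap_bot, ker_subtype]
  exact ⟨(quotientInfEquivSupQuotient C A).symm.trans (quotEquivOfEqBot _ hbot)⟩

section Orthogonal

variable {𝕜 E : Type*} [RCLike 𝕜] [NormedAddCommGroup E] [InnerProductSpace 𝕜 E]

theorem add_eq_zero_iff_of_inner_eq_zero {a b : E} (hab : ⟪a, b⟫_𝕜 = 0) :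
    a + b = 0 ↔ a = 0 ∧ b = 0 := by
  refine ⟨fun h => ?_, fun ⟨ha, hb⟩ => by rw [ha, hb, add_zero]⟩
  have ha : a = 0 := by
    rw [eq_neg_of_add_eq_zero_right h, inner_neg_right, neg_eq_zero] at hab
    exact inner_self_eq_zero.1 hab
  exact ⟨ha, by rwa [ha, zero_add] at h⟩

/-- A vector of `closure A` lying in `A ⊕ B` has its `B`-component in `closure A ⊓ Aᗮ = 0`. -/
theorem Submodule.isClosed_of_le_sup_of_le_orthogonal {A B S : Submodule 𝕜 E}
    [FiniteDimensional 𝕜 (E ⧸ S)] (hS : IsClosed (S : Set E)) (hSAB : S ≤ A ⊔ B)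
    (hBA : B ≤ Aᗮ) : IsClosed (A : Set E) := by
  refine isClosed_of_topologicalClosure_inf_le hS fun x ⟨hxA, hxS⟩ => ?_
  obtain ⟨a, ha, b, hb, rfl⟩ := mem_sup.1 (hSAB hxS)
  have hbA : b ∈ A.topologicalClosure := by
    simpa using sub_mem hxA (A.le_topologicalClosure ha)
  have hb0 : b = 0 := Aᗮ.orthogonal_disjoint.eq_bot.le
    ⟨hBA hb, A.topologicalClosure_minimal A.le_orthogonal_orthogonal Aᗮ.isClosed_orthogonal hbA⟩
  rwa [hb0, add_zero]

theorem Submodule.orthogonal_inf_sup_sup_eq_top {A B : Submodule 𝕜 E}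
    [A.HasOrthogonalProjection] [B.HasOrthogonalProjection] (hBA : B ≤ Aᗮ) :
    Bᗮ ⊓ Aᗮ ⊔ A ⊔ B = ⊤ := by
  calc Bᗮ ⊓ Aᗮ ⊔ A ⊔ B = A ⊔ (B ⊔ Bᗮ ⊓ Aᗮ) := by ac_rfl
    _ = ⊤ := by
      rw [sup_orthogonal_inf_of_hasOrthogonalProjection hBA,
        sup_orthogonal_of_hasOrthogonalProjection]

end Orthogonal

section AdjointPair

variable {𝕜 E F : Type*} [RCLike 𝕜] [NormedAddCommGroup E] [InnerProductSpace 𝕜 E]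
  [NormedAddCommGroup F] [InnerProductSpace 𝕜 F] {D : Submodule 𝕜 E} {Dδ : Submodule 𝕜 F}
  {d : D →ₗ[𝕜] F} {δ : Dδ →ₗ[𝕜] E}

theorem exists_mem_dom_adjoint_apply_eq (hdense : Dense (D : Set E))
    (hadj_mem : ∀ v : F, v ∈ Dδ ↔ ∃ w : E, ∀ u : D, ⟪d u, v⟫_𝕜 = ⟪(u : E), w⟫_𝕜)
    (hadj : ∀ (v : Dδ) (u : D), ⟪d u, (v : F)⟫_𝕜 = ⟪(u : E), δ v⟫_𝕜)
    {a : E} {b : F} (h : ∀ u : D, ⟪d u, b⟫_𝕜 = ⟪(u : E), a⟫_𝕜) :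
    ∃ hb : b ∈ Dδ, δ ⟨b, hb⟩ = a := by
  have hb : b ∈ Dδ := (hadj_mem b).2 ⟨a, h⟩
  refine ⟨hb, sub_eq_zero.1 (hdense.eq_zero_of_inner_right 𝕜 fun u hu => ?_)⟩
  rw [inner_sub_right, ← hadj ⟨b, hb⟩ ⟨u, hu⟩, h ⟨u, hu⟩, sub_self]

theorem map_ker_adjoint_eq_orthogonal_range (hdense : Dense (D : Set E))
    (hadj_mem : ∀ v : F, v ∈ Dδ ↔ ∃ w : E, ∀ u : D, ⟪d u, v⟫_𝕜 = ⟪(u : E), w⟫_𝕜)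
    (hadj : ∀ (v : Dδ) (u : D), ⟪d u, (v : F)⟫_𝕜 = ⟪(u : E), δ v⟫_𝕜) :
    (ker δ).map Dδ.subtype = (range d)ᗮ := by
  refine le_antisymm ?_ fun b hb => ?_
  · rintro _ ⟨v, hv, rfl⟩ _ ⟨u, rfl⟩
    rw [subtype_apply, hadj, mem_ker.1 hv, inner_zero_right]
  · have h (u : D) : ⟪d u, b⟫_𝕜 = ⟪(u : E), 0⟫_𝕜 := by
      rw [inner_zero_right]; exact hb _ ⟨u, rfl⟩
    obtain ⟨hbD, hδb⟩ := exists_mem_dom_adjoint_apply_eq hdense hadj_mem hadj h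
    exact ⟨⟨b, hbD⟩, hδb, rfl⟩

variable (d) in
def graphLp : Submodule 𝕜 (WithLp 2 (E × F)) :=
  (range (D.subtype.prod d)).comap (WithLp.linearEquiv 2 𝕜 (E × F)).toLinearMap

theorem mem_graphLp {z : WithLp 2 (E × F)} :
    z ∈ graphLp d ↔ ∃ u : D, (u : E) = z.ofLp.1 ∧ d u = z.ofLp.2 := by
  simp [graphLp, Prod.ext_iff]

theorem isClosed_graphLp (hclosed : IsClosed {p : E × F | ∃ u : D, (u : E) = p.1 ∧ d u = p.2}) :
    IsClosed (graphLp d : Set (WithLp 2 (E × F))) := by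
  have hG : (graphLp d : Set (WithLp 2 (E × F))) =
      WithLp.ofLp ⁻¹' {p : E × F | ∃ u : D, (u : E) = p.1 ∧ d u = p.2} := by
    ext z; exact mem_graphLp
  rw [hG]
  exact hclosed.preimage (WithLp.prod_continuous_ofLp 2 E F)

theorem exists_mem_dom_adjoint_of_mem_orthogonal_graphLp (hdense : Dense (D : Set E))
    (hadj_mem : ∀ v : F, v ∈ Dδ ↔ ∃ w : E, ∀ u : D, ⟪d u, v⟫_𝕜 = ⟪(u : E), w⟫_𝕜)
    (hadj : ∀ (v : Dδ) (u : D), ⟪d u, (v : F)⟫_𝕜 = ⟪(u : E), δ v⟫_𝕜)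
    {z : WithLp 2 (E × F)} (hz : z ∈ (graphLp d)ᗮ) :
    ∃ hb : z.ofLp.2 ∈ Dδ, δ ⟨z.ofLp.2, hb⟩ = -z.ofLp.1 := by
  refine exists_mem_dom_adjoint_apply_eq hdense hadj_mem hadj fun u => ?_
  have hu : WithLp.toLp 2 ((u : E), d u) ∈ graphLp d := mem_graphLp.2 ⟨u, rfl, rfl⟩
  have := hz _ hu
  rw [WithLp.prod_inner_apply] at this
  rw [inner_neg_right, eq_neg_iff_add_eq_zero, add_comm]
  simpa using this

/-- For `x ⊥ ran δ`, the vector `(x, 0)` is orthogonal to `(graph d)ᗮ = {(-δ b, b)}`, so it lies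
in the closed graph of `d`. -/
theorem map_ker_eq_orthogonal_range_adjoint [CompleteSpace E] [CompleteSpace F]
    (hdense : Dense (D : Set E))
    (hclosed : IsClosed {p : E × F | ∃ u : D, (u : E) = p.1 ∧ d u = p.2})
    (hadj_mem : ∀ v : F, v ∈ Dδ ↔ ∃ w : E, ∀ u : D, ⟪d u, v⟫_𝕜 = ⟪(u : E), w⟫_𝕜)
    (hadj : ∀ (v : Dδ) (u : D), ⟪d u, (v : F)⟫_𝕜 = ⟪(u : E), δ v⟫_𝕜) :
    (ker d).map D.subtype = (range δ)ᗮ := by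
  refine le_antisymm ?_ fun x hx => ?_
  · rintro _ ⟨u, hu, rfl⟩ _ ⟨v, rfl⟩
    rw [subtype_apply, inner_eq_zero_symm, ← hadj, mem_ker.1 hu, inner_zero_left]
  · have : CompleteSpace (graphLp d) := (isClosed_graphLp hclosed).completeSpace_coe
    have hx0 : WithLp.toLp 2 (x, (0 : F)) ∈ (graphLp d)ᗮᗮ := fun z hz => by
      obtain ⟨hb, hδb⟩ := exists_mem_dom_adjoint_of_mem_orthogonal_graphLp hdense hadj_mem hadj hz
      rw [WithLp.prod_inner_apply, neg_eq_iff_eq_neg.1 hδb.symm]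
      simpa using hx _ ⟨_, rfl⟩
    obtain ⟨u, hux, hu0⟩ := mem_graphLp.1 (orthogonal_orthogonal (graphLp d) ▸ hx0)
    exact ⟨u, hu0, hux⟩

end AdjointPair

theorem range_le_orthogonal_range_adjoint {𝕜 H : Type*} [RCLike 𝕜] [NormedAddCommGroup H]
    [InnerProductSpace 𝕜 H] {D Dδ : Submodule 𝕜 H} {d : D →ₗ[𝕜] H} {δ : Dδ →ₗ[𝕜] H}
    (hsub : ∀ u : D, d u ∈ D) (hd2 : ∀ u : D, d ⟨d u, hsub u⟩ = 0)
    (hadj : ∀ (v : Dδ) (u : D), ⟪d u, (v : H)⟫_𝕜 = ⟪(u : H), δ v⟫_𝕜) :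
    range d ≤ (range δ)ᗮ := by
  rintro _ ⟨u, rfl⟩ _ ⟨v, rfl⟩
  have := hadj v ⟨d u, hsub u⟩
  rwa [hd2, inner_zero_left, eq_comm, inner_eq_zero_symm] at this

theorem map_ker_eq_inf_of_ker_iff {R M N P : Type*} [Ring R] [AddCommGroup M] [Module R M]
    [AddCommGroup N] [Module R N] [AddCommGroup P] [Module R P] {D Dδ : Submodule R M}
    {d : D →ₗ[R] N} {δ : Dδ →ₗ[R] N} {L : ↥(D ⊓ Dδ) →ₗ[R] P}
    (hL : ∀ u : ↥(D ⊓ Dδ), L u = 0 ↔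
      d ⟨u, (mem_inf.1 u.2).1⟩ = 0 ∧ δ ⟨u, (mem_inf.1 u.2).2⟩ = 0) :
    (ker L).map (D ⊓ Dδ).subtype = (ker d).map D.subtype ⊓ (ker δ).map Dδ.subtype := by
  refine le_antisymm ?_ ?_
  · rintro _ ⟨u, hu, rfl⟩
    obtain ⟨hdu, hδu⟩ := (hL u).1 hu
    exact ⟨⟨_, hdu, rfl⟩, ⟨_, hδu, rfl⟩⟩
  · rintro _ ⟨⟨u, hdu, rfl⟩, ⟨v, hδv, huv : (v : M) = u⟩⟩
    refine ⟨⟨u, mem_inf.2 ⟨u.2, huv ▸ v.2⟩⟩, (hL _).2 ⟨hdu, ?_⟩, rfl⟩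
    rwa [← mem_ker, ← (Subtype.ext huv : v = ⟨u, huv ▸ v.2⟩)]

/-- Abstract Kodaira decomposition / Hodge theorem for a Fredholm Hilbert complex
(Brüning–Lesch): for a closed densely defined `d` with `d² = 0` and adjoint `δ`, if the
operator `L = d + δ` on `D(d) ∩ D(δ)` is Fredholm, then the harmonic space
`𝓗 = ker d ∩ ker δ` is finite-dimensional, the ranges of `d` and `δ` are closed,
`H = 𝓗 ⊕ ran d ⊕ ran δ` orthogonally, and `ker d / ran d ≅ 𝓗`. -/
theorem stmt10 {H : Type*} [NormedAddCommGroup H] [InnerProductSpace ℂ H] [CompleteSpace H]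
    (D Dδ : Submodule ℂ H) (hdense : Dense (D : Set H))
    (d : ↥D →ₗ[ℂ] H) (δ : ↥Dδ →ₗ[ℂ] H)
    (hclosed : IsClosed {p : H × H | ∃ u : ↥D, (u : H) = p.1 ∧ d u = p.2})
    (hsub : ∀ u : ↥D, d u ∈ D)
    (hd2 : ∀ u : ↥D, d ⟨d u, hsub u⟩ = 0)
    (hadj_mem : ∀ v : H, v ∈ Dδ ↔ ∃ w : H, ∀ u : ↥D, (inner ℂ (d u) v : ℂ) = inner ℂ (u : H) w)
    (hadj : ∀ (v : ↥Dδ) (u : ↥D), (inner ℂ (d u) (v : H) : ℂ) = inner ℂ (u : H) (δ v))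
    (L : ↥(D ⊓ Dδ) →ₗ[ℂ] H)
    (hL : ∀ u : ↥(D ⊓ Dδ),
      L u = d ⟨(u : H), (Submodule.mem_inf.mp u.2).1⟩ + δ ⟨(u : H), (Submodule.mem_inf.mp u.2).2⟩)
    (hFredKer : FiniteDimensional ℂ (LinearMap.ker L))
    (hFredRan : IsClosed ((LinearMap.range L : Submodule ℂ H) : Set H))
    (hFredCoker : FiniteDimensional ℂ (H ⧸ LinearMap.range L)) :
    -- the harmonic space is ker d ∩ ker δ
    (∀ u : ↥(D ⊓ Dδ), L u = 0 ↔
      (d ⟨(u : H), (Submodule.mem_inf.mp u.2).1⟩ = 0 ∧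
       δ ⟨(u : H), (Submodule.mem_inf.mp u.2).2⟩ = 0)) ∧
    -- finite-dimensional harmonic space
    FiniteDimensional ℂ ↥((LinearMap.ker L).map (D ⊓ Dδ).subtype) ∧
    -- closed ranges
    IsClosed ((LinearMap.range d : Submodule ℂ H) : Set H) ∧
    IsClosed ((LinearMap.range δ : Submodule ℂ H) : Set H) ∧
    -- pairwise orthogonality
    ((LinearMap.ker L).map (D ⊓ Dδ).subtype ≤ (LinearMap.range d)ᗮ) ∧
    ((LinearMap.ker L).map (D ⊓ Dδ).subtype ≤ (LinearMap.range δ)ᗮ) ∧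
    (LinearMap.range d ≤ (LinearMap.range δ)ᗮ) ∧
    -- the Kodaira decomposition
    ((LinearMap.ker L).map (D ⊓ Dδ).subtype ⊔ LinearMap.range d ⊔ LinearMap.range δ = ⊤) ∧
    -- Hodge theorem: cohomology ≅ harmonic space
    Nonempty
      ((↥(Submodule.map D.subtype (LinearMap.ker d)) ⧸
          Submodule.comap (Submodule.map D.subtype (LinearMap.ker d)).subtype
            (LinearMap.range d)) ≃ₗ[ℂ]
        ↥((LinearMap.ker L).map (D ⊓ Dδ).subtype)) := by
  set A := range d
  set B := range δ
  have hAB : A ≤ Bᗮ := range_le_orthogonal_range_adjoint hsub hd2 hadj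
  have hBA : B ≤ Aᗮ := IsOrtho.symm hAB
  have harmonic : ∀ u : ↥(D ⊓ Dδ), L u = 0 ↔
      (d ⟨(u : H), (mem_inf.mp u.2).1⟩ = 0 ∧ δ ⟨(u : H), (mem_inf.mp u.2).2⟩ = 0) := fun u => by
    rw [hL]
    exact add_eq_zero_iff_of_inner_eq_zero (hBA ⟨_, rfl⟩ _ ⟨_, rfl⟩)
  have hker_d := map_ker_eq_orthogonal_range_adjoint hdense hclosed hadj_mem hadj
  have h𝓗 : (ker L).map (D ⊓ Dδ).subtype = Bᗮ ⊓ Aᗮ := by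
    rw [map_ker_eq_inf_of_ker_iff harmonic, hker_d,
      map_ker_adjoint_eq_orthogonal_range hdense hadj_mem hadj]
  have hLAB : range L ≤ A ⊔ B := by
    rintro _ ⟨u, rfl⟩
    rw [hL]
    exact add_mem_sup ⟨_, rfl⟩ ⟨_, rfl⟩
  have hA : IsClosed (A : Set H) := isClosed_of_le_sup_of_le_orthogonal hFredRan hLAB hBA
  have hB : IsClosed (B : Set H) :=
    isClosed_of_le_sup_of_le_orthogonal hFredRan (sup_comm A B ▸ hLAB) hAB
  have := hA.completeSpace_coe
  have := hB.completeSpace_coe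
  refine ⟨harmonic, Module.Finite.map _ _, hA, hB, h𝓗 ▸ inf_le_right, h𝓗 ▸ inf_le_left, hAB,
    h𝓗 ▸ orthogonal_inf_sup_sup_eq_top hBA, nonempty_quotient_equiv_of_sup_eq ?_ ?_⟩
  · rw [h𝓗, hker_d, sup_comm, inf_comm, sup_orthogonal_inf_of_hasOrthogonalProjection hAB]
  · exact h𝓗 ▸ A.orthogonal_disjoint.symm.mono_left inf_le_right
end
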